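/- Let (X, μ) be a standard Borel probability space. Suppose a sequence of measurable semimetrics ρ_n converges to a measurable semimetric ρ in the m-norm (i.e., ‖ρ_n − ρ‖_m → 0), and for every ε>0 the ε-entropy H_ε(ρ_n, μ) is finite for all sufficiently large n. Then ρ is an admissible semimetric. -/

import Mathlib

open MeasureTheory Filter Function Set
open scoped ENNReal

/-- A semimetric on `X`: a nonnegative function vanishing on the diagonal, symmetric and
satisfying the triangle inequality for all points. -/
def IsSemimetric {X : Type*} (ρ : X → X → ℝ) : Prop :=
  (∀ x y, 0 ≤ ρ x y) ∧ (∀ x, ρ x x = 0) ∧ (∀ x y, ρ x y = ρ y x) ∧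
    ∀ x y z, ρ x z ≤ ρ x y + ρ y z

/-- A metric on `X`: a semimetric that separates points. -/
def IsMetricFun {X : Type*} (ρ : X → X → ℝ) : Prop :=
  IsSemimetric ρ ∧ ∀ x y, ρ x y = 0 ↔ x = y

/-- The semimetric space `(S, ρ)` is separable. -/
def SeparableOn {X : Type*} (ρ : X → X → ℝ) (S : Set X) : Prop :=
  ∃ D : Set X, D ⊆ S ∧ D.Countable ∧ ∀ x ∈ S, ∀ ε : ℝ, 0 < ε → ∃ y ∈ D, ρ x y < ε

/-- A semimetric is admissible for `(X, μ)` if it is measurable on `(X × X, μ × μ)` and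
separable on a subset of full measure. -/
def Admissible {X : Type*} [MeasurableSpace X] (μ : Measure X) (ρ : X → X → ℝ) : Prop :=
  Measurable (Function.uncurry ρ) ∧
    ∃ S : Set X, MeasurableSet S ∧ μ Sᶜ = 0 ∧ SeparableOn ρ S

/-- An `ε`-cover of size `k`: `X = X₀ ∪ X₁ ∪ ⋯ ∪ X_k` with `μ(X₀) < ε` and
`diam_ρ(X_j) < ε` for `j = 1, …, k`. -/
def IsEpsCover {X : Type*} [MeasurableSpace X] (μ : Measure X) (ρ : X → X → ℝ)
    (ε : ℝ) (k : ℕ) : Prop :=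
  ∃ A : Fin (k + 1) → Set X, (∀ i, MeasurableSet (A i)) ∧ (⋃ i, A i) = Set.univ ∧
    μ (A 0) < ENNReal.ofReal ε ∧
    ∀ i, i ≠ 0 → ∀ x ∈ A i, ∀ y ∈ A i, ρ x y < ε

/-- The `ε`-entropy of `(X, μ, ρ)`: the binary logarithm of the smallest size of an
`ε`-cover, and `∞` if there is no finite `ε`-cover. -/
noncomputable def epsEntropy {X : Type*} [MeasurableSpace X] (μ : Measure X)
    (ρ : X → X → ℝ) (ε : ℝ) : ℝ≥0∞ :=
  sInf {h : ℝ≥0∞ | ∃ k : ℕ, IsEpsCover μ ρ ε k ∧ h = ENNReal.ofReal (Real.logb 2 k)}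

/-- The m-norm of `f`: the infimum of the `L¹`-norms of measurable semimetrics
dominating `|f|` almost everywhere (`∞` if there is no such semimetric). -/
noncomputable def mnorm {X : Type*} [MeasurableSpace X] (μ : Measure X)
    (f : X → X → ℝ) : ℝ≥0∞ :=
  sInf {c : ℝ≥0∞ | ∃ ρ : X → X → ℝ, IsSemimetric ρ ∧ Measurable (Function.uncurry ρ) ∧
    (∀ᵐ p ∂(μ.prod μ), |f p.1 p.2| ≤ ρ p.1 p.2) ∧
    c = ∫⁻ p, ENNReal.ofReal (ρ p.1 p.2) ∂(μ.prod μ)}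

/-- The m-distance between two functions. -/
noncomputable def mdist {X : Type*} [MeasurableSpace X] (μ : Measure X)
    (f g : X → X → ℝ) : ℝ≥0∞ :=
  mnorm μ fun x y => f x y - g x y

/-- The `L¹(X × X, μ × μ)` distance between two functions. -/
noncomputable def L1dist {X : Type*} [MeasurableSpace X] (μ : Measure X)
    (f g : X → X → ℝ) : ℝ≥0∞ :=
  ∫⁻ p, ENNReal.ofReal |f p.1 p.2 - g p.1 p.2| ∂(μ.prod μ)

/-!
At scale `ε`, take `ρ_n` with a finite `ε`-cover `A₀, …, A_k` and `|ρ_n - ρ| ≤ σ` a.e. for a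
semimetric `σ` of integral `< ε²`. By Markov's inequality twice, off a set of measure `≤ 2ε` every
point is `σ`-within `ε` of more than half of `X`, so any two such points are `2ε`-close for `σ`; hence
`ρ < 3ε` a.e. on every cell `A_j` (`j ≠ 0`) cut down to these points. Two points of a non-null cell
that are `3ε`-close to almost all of it are `6ε`-close to each other through a common point.
Borel–Cantelli over the scales `2⁻ᵐ` gives a full-measure set on which one point per cell is dense.
-/

lemma separableOn_of_forall_exists_cell {X ι : Type*} [Countable ι] {ρ : X → X → ℝ} {S : Set X}
    (C : ι → Set X) (h : ∀ x ∈ S, ∀ ε : ℝ, 0 < ε → ∃ i, x ∈ C i ∧ ∀ y ∈ C i ∩ S, ρ x y < ε) :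
    SeparableOn ρ S := by
  refine ⟨range fun i : {i // (C i ∩ S).Nonempty} => i.2.some, ?_, countable_range _, ?_⟩
  · rintro _ ⟨i, rfl⟩
    exact i.2.some_mem.2
  · intro x hx ε hε
    obtain ⟨i, hxi, hi⟩ := h x hx ε hε
    have hne : (C i ∩ S).Nonempty := ⟨x, hxi, hx⟩
    exact ⟨hne.some, ⟨⟨i, hne⟩, rfl⟩, hi _ hne.some_mem⟩

section

variable {X : Type*} [MeasurableSpace X] {μ : Measure X}

def HasAECells (μ : Measure X) (ρ : X → X → ℝ) (r δ : ℝ) : Prop :=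
  ∃ (k : ℕ) (C : Fin k → Set X) (E : Set X), μ E ≤ ENNReal.ofReal δ ∧
    (∀ x ∉ E, ∃ i, x ∈ C i ∧ μ (C i) ≠ 0) ∧
    ∀ᵐ p ∂μ.prod μ, ∀ i, p.1 ∈ C i → p.2 ∈ C i → ρ p.1 p.2 < r

lemma exists_isEpsCover_of_epsEntropy_ne_top {ρ : X → X → ℝ} {ε : ℝ}
    (h : epsEntropy μ ρ ε ≠ ∞) : ∃ k, IsEpsCover μ ρ ε k := by
  by_contra! hk
  refine h ?_
  rw [epsEntropy, sInf_eq_top]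
  rintro _ ⟨k, hcover, -⟩
  exact absurd hcover (hk k)

lemma exists_semimetric_of_mnorm_lt {f : X → X → ℝ} {c : ℝ≥0∞} (h : mnorm μ f < c) :
    ∃ σ : X → X → ℝ, IsSemimetric σ ∧ Measurable (uncurry σ) ∧
      (∀ᵐ p ∂μ.prod μ, |f p.1 p.2| ≤ σ p.1 p.2) ∧
      ∫⁻ p, ENNReal.ofReal (σ p.1 p.2) ∂μ.prod μ < c := by
  obtain ⟨_, ⟨σ, hσ, hσm, hf, rfl⟩, hlt⟩ := sInf_lt_iff.mp h
  exact ⟨σ, hσ, hσm, hf, hlt⟩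

lemma measure_setOf_inv_two_le_measure_le [SFinite μ] {σ : X → X → ℝ}
    (hσm : Measurable (uncurry σ)) {ε : ℝ} (hε : 0 < ε)
    (hint : ∫⁻ p, ENNReal.ofReal (σ p.1 p.2) ∂μ.prod μ < ENNReal.ofReal (ε * ε)) :
    μ {x | 2⁻¹ ≤ μ {y | ε < σ x y}} ≤ 2 * ENNReal.ofReal ε := by
  have hε' : ENNReal.ofReal ε ≠ 0 := (ENNReal.ofReal_pos.mpr hε).ne'
  have hs : MeasurableSet {p : X × X | ε < σ p.1 p.2} := measurableSet_lt measurable_const hσm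
  have hpair : μ.prod μ {p : X × X | ε < σ p.1 p.2} ≤ ENNReal.ofReal ε :=
    calc μ.prod μ {p : X × X | ε < σ p.1 p.2}
        ≤ μ.prod μ {p | ENNReal.ofReal ε ≤ ENNReal.ofReal (σ p.1 p.2)} :=
          measure_mono fun p hp => ENNReal.ofReal_le_ofReal (le_of_lt hp)
      _ ≤ (∫⁻ p, ENNReal.ofReal (σ p.1 p.2) ∂μ.prod μ) / ENNReal.ofReal ε :=
          meas_ge_le_lintegral_div (ENNReal.measurable_ofReal.comp hσm).aemeasurable hε'
            ENNReal.ofReal_ne_top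
      _ ≤ ENNReal.ofReal (ε * ε) / ENNReal.ofReal ε := by gcongr
      _ = ENNReal.ofReal ε := by
          rw [ENNReal.ofReal_mul hε.le, ENNReal.mul_div_cancel_right hε' ENNReal.ofReal_ne_top]
  calc μ {x | 2⁻¹ ≤ μ {y | ε < σ x y}}
      ≤ (∫⁻ x, μ {y | ε < σ x y} ∂μ) / 2⁻¹ :=
        meas_ge_le_lintegral_div (measurable_measure_prodMk_left hs).aemeasurable (by simp)
          (by simp)
    _ = μ.prod μ {p : X × X | ε < σ p.1 p.2} * 2 := by
        rw [Measure.prod_apply hs, div_eq_mul_inv, inv_inv]; rfl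
    _ ≤ 2 * ENNReal.ofReal ε := by rw [mul_comm]; gcongr

lemma IsSemimetric.le_of_measure_lt_inv_two [IsProbabilityMeasure μ] {σ : X → X → ℝ}
    (hσ : IsSemimetric σ) {ε : ℝ} {a b : X} (ha : μ {y | ε < σ a y} < 2⁻¹)
    (hb : μ {y | ε < σ b y} < 2⁻¹) : σ a b ≤ 2 * ε := by
  obtain ⟨w, haw, hbw⟩ : ∃ w, σ a w ≤ ε ∧ σ b w ≤ ε := by
    by_contra! h
    have hcover : univ ⊆ {y | ε < σ a y} ∪ {y | ε < σ b y} := fun w _ =>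
      (le_or_gt (σ a w) ε).elim (fun haw => Or.inr (h w haw)) Or.inl
    have := calc (1 : ℝ≥0∞) = μ univ := measure_univ.symm
      _ ≤ μ {y | ε < σ a y} + μ {y | ε < σ b y} := (measure_mono hcover).trans (measure_union_le _ _)
      _ < 2⁻¹ + 2⁻¹ := ENNReal.add_lt_add ha hb
      _ = 1 := ENNReal.inv_two_add_inv_two
    exact lt_irrefl _ this
  calc σ a b ≤ σ a w + σ w b := hσ.2.2.2 a w b
    _ = σ a w + σ b w := by rw [hσ.2.2.1 w b]
    _ ≤ 2 * ε := by linarith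

lemma IsSemimetric.lt_two_mul_of_ae {ρ : X → X → ℝ} (hρ : IsSemimetric ρ) {C : Set X}
    (hC : μ C ≠ 0) {x y : X} {r : ℝ} (hx : ∀ᵐ z ∂μ, z ∈ C → ρ x z < r)
    (hy : ∀ᵐ z ∂μ, z ∈ C → ρ y z < r) : ρ x y < 2 * r := by
  obtain ⟨z, hzC, hxz, hyz⟩ := Measure.exists_mem_of_measure_ne_zero_of_ae hC
    (ae_restrict_of_ae (hx.and hy))
  calc ρ x y ≤ ρ x z + ρ z y := hρ.2.2.2 x z y
    _ = ρ x z + ρ y z := by rw [hρ.2.2.1 z y]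
    _ < 2 * r := by linarith [hxz hzC, hyz hzC]

lemma hasAECells_of_approx [IsProbabilityMeasure μ] {ρ t σ : X → X → ℝ} {ε : ℝ} {k : ℕ}
    (hε : 0 < ε) (hσ : IsSemimetric σ) (hσm : Measurable (uncurry σ))
    (hint : ∫⁻ p, ENNReal.ofReal (σ p.1 p.2) ∂μ.prod μ < ENNReal.ofReal (ε * ε))
    (happrox : ∀ᵐ p ∂μ.prod μ, |t p.1 p.2 - ρ p.1 p.2| ≤ σ p.1 p.2)
    (hcover : IsEpsCover μ t ε k) : HasAECells μ ρ (3 * ε) (3 * ε) := by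
  obtain ⟨A, -, hAuniv, hA0, hAdiam⟩ := hcover
  set G := {x | μ {y | ε < σ x y} < 2⁻¹}
  set C : Fin k → Set X := fun i => G ∩ A i.succ
  refine ⟨k, C, A 0 ∪ Gᶜ ∪ ⋃ (i) (_ : μ (C i) = 0), C i, ?_, ?_, ?_⟩
  · have hGc : Gᶜ = {x | 2⁻¹ ≤ μ {y | ε < σ x y}} := by ext; simp [G]
    have hnull : μ (⋃ (i) (_ : μ (C i) = 0), C i) = 0 :=
      measure_iUnion_null fun i => measure_iUnion_null id
    calc μ (A 0 ∪ Gᶜ ∪ ⋃ (i) (_ : μ (C i) = 0), C i)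
        ≤ μ (A 0 ∪ Gᶜ) + μ (⋃ (i) (_ : μ (C i) = 0), C i) := measure_union_le _ _
      _ ≤ μ (A 0) + μ Gᶜ + 0 := by rw [hnull]; exact add_le_add_left (measure_union_le _ _) 0
      _ ≤ ENNReal.ofReal ε + 2 * ENNReal.ofReal ε := by
          rw [add_zero, hGc]
          exact add_le_add hA0.le (measure_setOf_inv_two_le_measure_le hσm hε hint)
      _ = ENNReal.ofReal (3 * ε) := by
          rw [ENNReal.ofReal_mul (by norm_num)]; norm_num; ring
  · intro x hx
    simp only [mem_union, mem_iUnion, not_or, not_exists, mem_compl_iff, not_not] at hx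
    obtain ⟨⟨hxA0, hxG⟩, hxnull⟩ := hx
    obtain ⟨j, hj⟩ := mem_iUnion.mp (hAuniv.symm ▸ mem_univ x : x ∈ ⋃ i, A i)
    obtain ⟨i, rfl⟩ := Fin.exists_succ_eq.mpr fun h => hxA0 (h ▸ hj)
    exact ⟨i, ⟨hxG, hj⟩, fun h => hxnull i h ⟨hxG, hj⟩⟩
  · filter_upwards [happrox] with p hp i h1 h2
    have ht : t p.1 p.2 < ε := hAdiam _ (Fin.succ_ne_zero i) _ h1.2 _ h2.2
    have hσ2 : σ p.1 p.2 ≤ 2 * ε := hσ.le_of_measure_lt_inv_two h1.1 h2.1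
    linarith [neg_abs_le (t p.1 p.2 - ρ p.1 p.2)]

theorem exists_separableOn_of_hasAECells [SFinite μ] {ρ : X → X → ℝ} (hρ : IsSemimetric ρ)
    (h : ∀ ε : ℝ, 0 < ε → HasAECells μ ρ ε ε) :
    ∃ S, MeasurableSet S ∧ μ Sᶜ = 0 ∧ SeparableOn ρ S := by
  set e : ℕ → ℝ := fun m => 2⁻¹ ^ m
  have he : ∀ m, 0 < e m := fun m => by positivity
  choose k C E hE hcell hae using fun m => h (e m) (he m)
  have hlimsup : μ (limsup E atTop) = 0 := by
    refine measure_limsup_atTop_eq_zero (ne_top_of_le_ne_top ?_ (ENNReal.tsum_le_tsum hE))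
    simp only [e, ENNReal.ofReal_pow (by norm_num : (0 : ℝ) ≤ 2⁻¹), ENNReal.tsum_geometric]
    exact ENNReal.inv_ne_top.mpr (tsub_pos_iff_lt.mpr (ENNReal.ofReal_lt_one.mpr (by norm_num))).ne'
  have hae' : ∀ᵐ x ∂μ, ∀ᵐ y ∂μ, ∀ m i, x ∈ C m i → y ∈ C m i → ρ x y < e m :=
    Measure.ae_ae_of_ae_prod (ae_all_iff.mpr hae)
  set T := {x | x ∉ limsup E atTop ∧ ∀ᵐ y ∂μ, ∀ m i, x ∈ C m i → y ∈ C m i → ρ x y < e m}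
  have hT : μ Tᶜ = 0 := ae_iff.mp ((measure_eq_zero_iff_ae_notMem.mp hlimsup).and hae')
  refine ⟨(toMeasurable μ Tᶜ)ᶜ, (measurableSet_toMeasurable _ _).compl, ?_, ?_⟩
  · rwa [compl_compl, measure_toMeasurable]
  have hST : (toMeasurable μ Tᶜ)ᶜ ⊆ T := compl_subset_comm.mp (subset_toMeasurable _ _)
  refine separableOn_of_forall_exists_cell (fun j : Σ m, Fin (k m) => C j.1 j.2) ?_
  intro x hx ε hε
  obtain ⟨hxE, hxρ⟩ := hST hx
  have hsmall : ∀ᶠ m in atTop, 2 * e m < ε :=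
    (tendsto_pow_atTop_nhds_zero_of_lt_one (by norm_num) (by norm_num)).const_mul 2
      |>.eventually_lt_const (by simpa using hε)
  obtain ⟨m, hxm, hm⟩ :=
    ((not_frequently.mp fun h => hxE (mem_limsup_iff_frequently_mem.mpr h)).and hsmall).exists
  obtain ⟨i, hxi, hi⟩ := hcell m x hxm
  refine ⟨⟨m, i⟩, hxi, fun y ⟨hyi, hy⟩ => lt_of_lt_of_le ?_ hm.le⟩
  refine hρ.lt_two_mul_of_ae hi ?_ ?_
  · filter_upwards [hxρ] with z hz using hz m i hxi
  · filter_upwards [(hST hy).2] with z hz using hz m i hyi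

end

theorem statement5_general {X : Type*} [MeasurableSpace X]
    (μ : Measure X) [IsProbabilityMeasure μ] (ρn : ℕ → X → X → ℝ) (ρ : X → X → ℝ)
    (hρ : IsSemimetric ρ) (hρmeas : Measurable (Function.uncurry ρ))
    (hconv : Tendsto (fun n => mdist μ (ρn n) ρ) atTop (nhds 0))
    (hent : ∀ ε : ℝ, 0 < ε → ∃ N : ℕ, ∀ n ≥ N, epsEntropy μ (ρn n) ε ≠ ∞) :
    Admissible μ ρ := by
  refine ⟨hρmeas, exists_separableOn_of_hasAECells hρ fun ε hε => ?_⟩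
  have hε3 : 0 < ε / 3 := by positivity
  obtain ⟨N, hN⟩ := hent (ε / 3) hε3
  obtain ⟨n, hn, hnN⟩ := ((hconv.eventually_lt_const
    (ENNReal.ofReal_pos.mpr (mul_pos hε3 hε3))).and (eventually_ge_atTop N)).exists
  obtain ⟨k, hk⟩ := exists_isEpsCover_of_epsEntropy_ne_top (hN n hnN)
  obtain ⟨σ, hσ, hσm, happrox, hint⟩ := exists_semimetric_of_mnorm_lt hn
  have := hasAECells_of_approx hε3 hσ hσm hint happrox hk
  rwa [mul_div_cancel₀ ε three_ne_zero] at this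

/-- if a sequence of measurable semimetrics `ρ_n` converges to a measurable
semimetric `ρ` in the m-norm, and for every `ε > 0` the `ε`-entropy of `ρ_n` is finite for
all sufficiently large `n`, then `ρ` is an admissible semimetric. -/
theorem statement5 {X : Type*} [MeasurableSpace X] [StandardBorelSpace X]
    (μ : Measure X) [IsProbabilityMeasure μ] (ρn : ℕ → X → X → ℝ) (ρ : X → X → ℝ)
    (hρn : ∀ n, IsSemimetric (ρn n)) (hρnmeas : ∀ n, Measurable (Function.uncurry (ρn n)))
    (hρ : IsSemimetric ρ) (hρmeas : Measurable (Function.uncurry ρ))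
    (hconv : Tendsto (fun n => mdist μ (ρn n) ρ) atTop (nhds 0))
    (hent : ∀ ε : ℝ, 0 < ε → ∃ N : ℕ, ∀ n ≥ N, epsEntropy μ (ρn n) ε ≠ ∞) :
    Admissible μ ρ :=
  statement5_general μ ρn ρ hρ hρmeas hconv hent
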